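/- In λS, if ⟨t1⟩ →v* v1 for a value v1, then for all terms t0 and fresh variable x, both ⟨(λx.t0) ⟨t1⟩⟩ and (λx.⟨t0⟩) ⟨t1⟩ reduce (by →v*) to the common term ⟨t0{v1/x}⟩. -/

import Mathlib

/-- Terms of the calculus λS: variables, abstractions, applications,
    shift (Sk.t) and reset (⟨t⟩). -/
inductive Tm : Type
  | var : ℕ → Tm
  | lam : ℕ → Tm → Tm
  | app : Tm → Tm → Tm
  | shift : ℕ → Tm → Tm
  | reset : Tm → Tm
deriving DecidableEq

namespace Tm

/-- Values are λ-abstractions. -/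
def IsValue : Tm → Prop
  | lam _ _ => True
  | _ => False

/-- Free variables. -/
def fv : Tm → Finset ℕ
  | var x => {x}
  | lam x t => fv t \ {x}
  | app a b => fv a ∪ fv b
  | shift k t => fv t \ {k}
  | reset t => fv t

def Closed (t : Tm) : Prop := fv t = ∅

/-- Substitution t{v/x} (substituted terms are closed values, so no
    capture can occur). -/
def subst : Tm → ℕ → Tm → Tm
  | var y, x, v => if y = x then v else var y
  | lam y t, x, v => if y = x then lam y t else lam y (subst t x v)
  | app a b, x, v => app (subst a x v) (subst b x v)
  | shift k t, x, v => if k = x then shift k t else shift k (subst t x v)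
  | reset t, x, v => reset (subst t x v)

end Tm

/-- (Evaluation) contexts F ::= [] | v F | F t | ⟨F⟩, represented outside-in.
    Pure contexts E are those with no reset constructor. -/
inductive Ctx : Type
  | hole : Ctx
  | appR : Tm → Ctx → Ctx   -- v F
  | appL : Ctx → Tm → Ctx   -- F t
  | reset : Ctx → Ctx       -- ⟨F⟩
deriving DecidableEq

namespace Ctx

def plug : Ctx → Tm → Tm
  | hole, t => t
  | appR v F, t => Tm.app v (F.plug t)
  | appL F u, t => Tm.app (F.plug t) u
  | reset F, t => Tm.reset (F.plug t)

/-- Well-formedness: in `v F` the term v must be a value. -/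
def Wf : Ctx → Prop
  | hole => True
  | appR v F => v.IsValue ∧ F.Wf
  | appL F _ => F.Wf
  | reset F => F.Wf

/-- Pure contexts contain no reset around the hole. -/
def Pure : Ctx → Prop
  | hole => True
  | appR _ F => F.Pure
  | appL F _ => F.Pure
  | reset _ => False

def fv : Ctx → Finset ℕ
  | hole => ∅
  | appR v F => v.fv ∪ F.fv
  | appL F u => F.fv ∪ u.fv
  | reset F => F.fv

/-- Context composition: (F.comp G)[t] = F[G[t]]. -/
def comp : Ctx → Ctx → Ctx
  | hole, G => G
  | appR v F, G => appR v (F.comp G)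
  | appL F u, G => appL (F.comp G) u
  | reset F, G => reset (F.comp G)

end Ctx

/-- A canonical fresh variable not occurring in the finite set s. -/
def fresh (s : Finset ℕ) : ℕ := s.sup id + 1

/-- The reduction relation →v of λS. -/
inductive Red : Tm → Tm → Prop
  | beta (F : Ctx) (x : ℕ) (t v : Tm) :
      F.Wf → v.IsValue →
      Red (F.plug (Tm.app (Tm.lam x t) v)) (F.plug (t.subst x v))
  | shift (F E : Ctx) (k : ℕ) (t : Tm) :
      F.Wf → E.Wf → E.Pure →
      Red (F.plug (Tm.reset (E.plug (Tm.shift k t))))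
          (F.plug (Tm.reset (t.subst k
            (Tm.lam (fresh E.fv) (Tm.reset (E.plug (Tm.var (fresh E.fv))))))))
  | reset (F : Ctx) (v : Tm) :
      F.Wf → v.IsValue →
      Red (F.plug (Tm.reset v)) (F.plug v)

/-- A term is stuck if it is not a value and admits no reduction step. -/
def Stuck (t : Tm) : Prop := ¬ t.IsValue ∧ ∀ t', ¬ Red t t'

/-- A normal form is a value or a stuck term. -/
def NormalForm (t : Tm) : Prop := t.IsValue ∨ Stuck t

/-- Reflexive-transitive closure of reduction. -/
def Steps : Tm → Tm → Prop := Relation.ReflTransGen Red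

/-- Evaluation: t ⇓ t' when t →v* t' and t' is irreducible. -/
def Evals (t t' : Tm) : Prop := Steps t t' ∧ ∀ u, ¬ Red t' u

/-- Redexes: (λx.t) v, ⟨E[Sk.t]⟩ with E pure, and ⟨v⟩. -/
def IsRedex (r : Tm) : Prop :=
  (∃ x t v, Tm.IsValue v ∧ r = Tm.app (Tm.lam x t) v) ∨
  (∃ E : Ctx, ∃ k t, E.Wf ∧ E.Pure ∧ r = Tm.reset (E.plug (Tm.shift k t))) ∨
  (∃ v, Tm.IsValue v ∧ r = Tm.reset v)

/-- Divergence: an infinite reduction sequence. -/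
def Diverges (t : Tm) : Prop := ∃ f : ℕ → Tm, f 0 = t ∧ ∀ n, Red (f n) (f (n + 1))

/-- Ω = (λx.x x)(λx.x x). -/
def Omega : Tm :=
  Tm.app (Tm.lam 0 (Tm.app (Tm.var 0) (Tm.var 0)))
         (Tm.lam 0 (Tm.app (Tm.var 0) (Tm.var 0)))

/-- Arbitrary one-hole contexts C. -/
inductive GCtx : Type
  | hole : GCtx
  | lam : ℕ → GCtx → GCtx
  | appL : GCtx → Tm → GCtx
  | appR : Tm → GCtx → GCtx
  | shift : ℕ → GCtx → GCtx
  | reset : GCtx → GCtx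

def GCtx.plug : GCtx → Tm → Tm
  | hole, t => t
  | lam x C, t => Tm.lam x (C.plug t)
  | appL C u, t => Tm.app (C.plug t) u
  | appR u C, t => Tm.app u (C.plug t)
  | shift k C, t => Tm.shift k (C.plug t)
  | reset C, t => Tm.reset (C.plug t)

/-- Contextual equivalence for the relaxed semantics. -/
def CtxEquiv (t0 t1 : Tm) : Prop :=
  ∀ C : GCtx, (C.plug t0).Closed → (C.plug t1).Closed →
    ((∃ v, v.IsValue ∧ Evals (C.plug t0) v) ↔ (∃ v, v.IsValue ∧ Evals (C.plug t1) v)) ∧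
    ((∃ s, Stuck s ∧ Evals (C.plug t0) s) ↔ (∃ s, Stuck s ∧ Evals (C.plug t1) s))

/-- Contextual equivalence for the original (top-level reset) semantics. -/
def CtxEquivP (t0 t1 : Tm) : Prop :=
  ∀ C : GCtx, (Tm.reset (C.plug t0)).Closed → (Tm.reset (C.plug t1)).Closed →
    ((∃ v, v.IsValue ∧ Evals (Tm.reset (C.plug t0)) v) ↔
     (∃ v, v.IsValue ∧ Evals (Tm.reset (C.plug t1)) v))

/-- The term-generating closure of a relation R on closed terms. -/
inductive TmClo (R : Tm → Tm → Prop) : Tm → Tm → Prop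
  | base {t t'} : R t t' → TmClo R t t'
  | var (x : ℕ) : TmClo R (Tm.var x) (Tm.var x)
  | lam {t t'} (x : ℕ) : TmClo R t t' → TmClo R (Tm.lam x t) (Tm.lam x t')
  | app {a a' b b'} : TmClo R a a' → TmClo R b b' →
      TmClo R (Tm.app a b) (Tm.app a' b')
  | shift {t t'} (k : ℕ) : TmClo R t t' → TmClo R (Tm.shift k t) (Tm.shift k t')
  | reset {t t'} : TmClo R t t' → TmClo R (Tm.reset t) (Tm.reset t')

theorem Ctx.plug_comp (F G : Ctx) (t : Tm) : (F.comp G).plug t = F.plug (G.plug t) := by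
  induction F <;> simp [Ctx.comp, Ctx.plug, *]

theorem Ctx.Wf.comp {F G : Ctx} (hF : F.Wf) (hG : G.Wf) : (F.comp G).Wf := by
  induction F <;> simp_all [Ctx.comp, Ctx.Wf]

/-- Reduction is closed under evaluation contexts: a redex in `G` is a redex in `F.comp G`. -/
theorem Red.plug {a b : Tm} {F : Ctx} (hF : F.Wf) (h : Red a b) :
    Red (F.plug a) (F.plug b) := by
  cases h with
  | beta G x t v hG hv => simpa only [Ctx.plug_comp] using Red.beta _ x t v (hF.comp hG) hv
  | shift G E k t hG hE hP => simpa only [Ctx.plug_comp] using Red.shift _ E k t (hF.comp hG) hE hP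
  | reset G v hG hv => simpa only [Ctx.plug_comp] using Red.reset _ v (hF.comp hG) hv

theorem Steps.plug {a b : Tm} {F : Ctx} (hF : F.Wf) (h : Steps a b) :
    Steps (F.plug a) (F.plug b) :=
  Relation.ReflTransGen.lift F.plug (fun _ _ => Red.plug hF) _ _ h

theorem Steps.app_lam_of_steps_value {s t v : Tm} (x : ℕ) (hv : v.IsValue) (h : Steps t v) :
    Steps (Tm.app (Tm.lam x s) t) (s.subst x v) := by
  have harg : Steps (Tm.app (Tm.lam x s) t) (Tm.app (Tm.lam x s) v) :=
    Steps.plug (F := Ctx.appR (Tm.lam x s) Ctx.hole) ⟨trivial, trivial⟩ h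
  exact harg.tail (Red.beta Ctx.hole x s v trivial hv)

theorem reset_beta_common_general (t0 t1 v1 : Tm) (x : ℕ)
    (hv1 : v1.IsValue) (h : Steps (Tm.reset t1) v1) :
    Steps (Tm.reset (Tm.app (Tm.lam x t0) (Tm.reset t1)))
          (Tm.reset (t0.subst x v1)) ∧
    Steps (Tm.app (Tm.lam x (Tm.reset t0)) (Tm.reset t1))
          (Tm.reset (t0.subst x v1)) :=
  ⟨Steps.plug (F := Ctx.reset Ctx.hole) trivial (Steps.app_lam_of_steps_value x hv1 h),
    Steps.app_lam_of_steps_value x hv1 h⟩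

/-- if ⟨t1⟩ →v* v1, then both ⟨(λx.t0)⟨t1⟩⟩ and (λx.⟨t0⟩)⟨t1⟩
    reduce to the common term ⟨t0{v1/x}⟩. -/
theorem reset_beta_common (t0 t1 v1 : Tm) (x : ℕ)
    (ht0 : Tm.fv t0 ⊆ {x}) (ht1 : t1.Closed)
    (hv1 : v1.IsValue) (h : Steps (Tm.reset t1) v1) :
    Steps (Tm.reset (Tm.app (Tm.lam x t0) (Tm.reset t1)))
          (Tm.reset (t0.subst x v1)) ∧
    Steps (Tm.app (Tm.lam x (Tm.reset t0)) (Tm.reset t1))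
          (Tm.reset (t0.subst x v1)) :=
  reset_beta_common_general t0 t1 v1 x hv1 h
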